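/- For all real numbers k₁, k₂ > 0 and d₁, d₂ < 0 there exists α₀ > 0 such that for every parameter value α ≥ α₀ the function g₁ = g₁^α satisfies: g₁^α(k₁, s₂) ≤ 0 for all s₂ ∈ [0, k₂], and g₁^α(d₁, s₂) ≥ 0 for all s₂ ∈ [d₂, 0]. -/

import Mathlib

/-!
For `s₁ ≠ 0` the term `-α (p₁ + q₁) |s₁|^(p₁+q₁-2) s₁` is linear in `α` with a slope of sign
`-sign s₁`, while the other two terms stay bounded: at `s₁ = k₁ > 0` the coupling term is bounded
by its value at `s₂ = k₂`, and at `s₁ = d₁ < 0` it vanishes because `(d₁⁺)^(p₁-1) = 0`.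
So both sign conditions hold for all large `α`.
-/

open Real Filter Set

noncomputable section

/-- The first component `g₁^α(s₁, s₂)` of the example vector field. -/
def g₁ (p₁ p₂ q₁ β γ α s₁ s₂ : ℝ) : ℝ :=
  -(α * (p₁ + q₁) * |s₁| ^ (p₁ + q₁ - 2) * s₁)
    + β * p₁ * (max s₁ 0) ^ (p₁ - 1) * (max s₂ 0) ^ p₂
    + γ * p₁ * |s₁| ^ (p₁ - 2) * s₁

lemma eventually_le_mul_atTop {c : ℝ} (hc : 0 < c) (b : ℝ) : ∀ᶠ α in atTop, b ≤ α * c :=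
  (tendsto_id.atTop_mul_const hc).eventually_ge_atTop b

variable {p₁ p₂ q₁ β : ℝ} (γ : ℝ)

lemma eventually_g₁_nonpos (hβ : 0 ≤ β) (hp₁ : 0 ≤ p₁) (hp₂ : 0 ≤ p₂) (hpq : 0 < p₁ + q₁)
    {s₁ : ℝ} (hs₁ : 0 < s₁) (k₂ : ℝ) :
    ∀ᶠ α in atTop, ∀ s₂ ∈ Icc 0 k₂, g₁ p₁ p₂ q₁ β γ α s₁ s₂ ≤ 0 := by
  have hslope : 0 < (p₁ + q₁) * s₁ ^ (p₁ + q₁ - 2) * s₁ := by positivity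
  filter_upwards [eventually_le_mul_atTop hslope
    (β * p₁ * s₁ ^ (p₁ - 1) * k₂ ^ p₂ + γ * p₁ * s₁ ^ (p₁ - 2) * s₁)] with α hα s₂ hs₂
  have hcoupling : β * p₁ * s₁ ^ (p₁ - 1) * (max s₂ 0) ^ p₂ ≤ β * p₁ * s₁ ^ (p₁ - 1) * k₂ ^ p₂ := by
    rw [max_eq_left hs₂.1]
    exact mul_le_mul_of_nonneg_left (rpow_le_rpow hs₂.1 hs₂.2 hp₂) (by positivity)
  rw [g₁, abs_of_pos hs₁, max_eq_left hs₁.le]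
  linarith

lemma eventually_g₁_nonneg (hp₁ : p₁ ≠ 1) (hpq : 0 < p₁ + q₁) {s₁ : ℝ} (hs₁ : s₁ < 0) :
    ∀ᶠ α in atTop, ∀ s₂, 0 ≤ g₁ p₁ p₂ q₁ β γ α s₁ s₂ := by
  have hslope : 0 < (p₁ + q₁) * |s₁| ^ (p₁ + q₁ - 2) * -s₁ := by
    have : 0 < |s₁| := abs_pos.2 hs₁.ne
    have : 0 < -s₁ := neg_pos.2 hs₁
    positivity
  filter_upwards [eventually_le_mul_atTop hslope (γ * p₁ * |s₁| ^ (p₁ - 2) * -s₁)] with α hα s₂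
  rw [g₁, max_eq_right hs₁.le, zero_rpow (sub_ne_zero.2 hp₁)]
  linarith

end

theorem stmt_9_general (p₁ p₂ q₁ β γ : ℝ)
    (hp₁ : 2 ≤ p₁) (hp₂ : 2 ≤ p₂) (hq₁ : 0 < q₁)
    (hβ : 0 < β)
    (k₁ k₂ d₁ d₂ : ℝ) (hk₁ : 0 < k₁) (hd₁ : d₁ < 0) :
    ∃ α₀ > 0, ∀ α ≥ α₀,
      (∀ s₂ ∈ Set.Icc (0 : ℝ) k₂,
        -(α * (p₁ + q₁) * |k₁| ^ (p₁ + q₁ - 2) * k₁)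
          + β * p₁ * (max k₁ 0) ^ (p₁ - 1) * (max s₂ 0) ^ p₂
          + γ * p₁ * |k₁| ^ (p₁ - 2) * k₁ ≤ 0) ∧
      (∀ s₂ ∈ Set.Icc d₂ (0 : ℝ),
        0 ≤ -(α * (p₁ + q₁) * |d₁| ^ (p₁ + q₁ - 2) * d₁)
          + β * p₁ * (max d₁ 0) ^ (p₁ - 1) * (max s₂ 0) ^ p₂
          + γ * p₁ * |d₁| ^ (p₁ - 2) * d₁) := by
  have hpq : 0 < p₁ + q₁ := by linarith
  obtain ⟨α₀, hα₀⟩ :=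
    ((eventually_g₁_nonpos γ hβ.le (by linarith) (by linarith : (0 : ℝ) ≤ p₂) hpq hk₁ k₂).and
      ((eventually_g₁_nonneg γ (by linarith) hpq hd₁).and (eventually_gt_atTop 0))
      ).exists_forall_of_atTop
  exact ⟨α₀, (hα₀ α₀ le_rfl).2.2,
    fun α hα => ⟨(hα₀ α hα).1, fun s₂ _ => (hα₀ α hα).2.1 s₂⟩⟩

/-- Hypothesis (H₁) for `g₁` holds for the example vector field if the
parameter `α` is sufficiently large. -/
theorem stmt_9 (p₁ p₂ q₁ q₂ β γ : ℝ)
    (hp₁ : 2 ≤ p₁) (hp₂ : 2 ≤ p₂) (hq₁ : 0 < q₁) (hq₂ : 0 < q₂)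
    (hβ : 0 < β) (hγ : 0 < γ)
    (k₁ k₂ d₁ d₂ : ℝ) (hk₁ : 0 < k₁) (hk₂ : 0 < k₂) (hd₁ : d₁ < 0) (hd₂ : d₂ < 0) :
    ∃ α₀ > 0, ∀ α ≥ α₀,
      (∀ s₂ ∈ Set.Icc (0 : ℝ) k₂,
        -(α * (p₁ + q₁) * |k₁| ^ (p₁ + q₁ - 2) * k₁)
          + β * p₁ * (max k₁ 0) ^ (p₁ - 1) * (max s₂ 0) ^ p₂
          + γ * p₁ * |k₁| ^ (p₁ - 2) * k₁ ≤ 0) ∧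
      (∀ s₂ ∈ Set.Icc d₂ (0 : ℝ),
        0 ≤ -(α * (p₁ + q₁) * |d₁| ^ (p₁ + q₁ - 2) * d₁)
          + β * p₁ * (max d₁ 0) ^ (p₁ - 1) * (max s₂ 0) ^ p₂
          + γ * p₁ * |d₁| ^ (p₁ - 2) * d₁) :=
  stmt_9_general p₁ p₂ q₁ β γ hp₁ hp₂ hq₁ hβ k₁ k₂ d₁ d₂ hk₁ hd₁
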